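/- Let G be a Type A subdivision of K_5, and let H be the induced subgraph of G consisting of the 4-cycle abcd of non-subdivided edges together with the vertex e and the four vertices adjacent to a, b, c, d on the subdivided paths to e. Then H has no star cutset, H has no vertex of degree at most 1, and H contains no vertex lying on every cycle of H. -/

import Mathlib

namespace BurlingFormal

open SimpleGraph

/-- An orientation of a simple graph, given as a relation choosing a direction for each edge. -/
def IsOrientation {V : Type} (G : SimpleGraph V) (A : V → V → Prop) : Prop :=
  (∀ u v, A u v → G.Adj u v) ∧ (∀ u v, G.Adj u v → (A u v ↔ ¬ A v u))

/-- A chordless cycle: a cycle such that every adjacency between its vertices is a cycle edge. -/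
def IsChordlessCycle {V : Type} (G : SimpleGraph V) {v : V} (c : G.Walk v v) : Prop :=
  c.IsCycle ∧ ∀ x y, x ∈ c.support → y ∈ c.support → G.Adj x y → s(x, y) ∈ c.edges

/-- A hole: a chordless cycle of length at least 4. -/
def IsHole {V : Type} (G : SimpleGraph V) {v : V} (c : G.Walk v v) : Prop :=
  IsChordlessCycle G c ∧ 4 ≤ c.length

/-- A source of a hole w.r.t. an orientation: both its neighbours on the hole are out-neighbours. -/
def IsHoleSource {V : Type} {G : SimpleGraph V} {v : V} (A : V → V → Prop)
    (c : G.Walk v v) (x : V) : Prop :=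
  x ∈ c.support ∧ ∀ y, s(x, y) ∈ c.edges → A x y

/-- A sink of a hole w.r.t. an orientation: both its neighbours on the hole are in-neighbours. -/
def IsHoleSink {V : Type} {G : SimpleGraph V} {v : V} (A : V → V → Prop)
    (c : G.Walk v v) (x : V) : Prop :=
  x ∈ c.support ∧ ∀ y, s(x, y) ∈ c.edges → A y x

/-- An extremum of a hole: a source or a sink of it. -/
def IsHoleExtremum {V : Type} {G : SimpleGraph V} {v : V} (A : V → V → Prop)
    (c : G.Walk v v) (x : V) : Prop :=
  IsHoleSource A c x ∨ IsHoleSink A c x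

/-- The hole has exactly two sources and exactly two sinks. -/
def TwoSourcesTwoSinks {V : Type} {G : SimpleGraph V} {v : V} (A : V → V → Prop)
    (c : G.Walk v v) : Prop :=
  (∃ s₁ s₂, s₁ ≠ s₂ ∧ IsHoleSource A c s₁ ∧ IsHoleSource A c s₂ ∧
    ∀ s, IsHoleSource A c s → s = s₁ ∨ s = s₂) ∧
  (∃ t₁ t₂, t₁ ≠ t₂ ∧ IsHoleSink A c t₁ ∧ IsHoleSink A c t₂ ∧
    ∀ t, IsHoleSink A c t → t = t₁ ∨ t = t₂)

/-- The pivot of a hole: a sink adjacent on the hole to all of its sources. -/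
def IsHolePivot {V : Type} {G : SimpleGraph V} {v : V} (A : V → V → Prop)
    (c : G.Walk v v) (x : V) : Prop :=
  IsHoleSink A c x ∧ ∀ y, IsHoleSource A c y → s(x, y) ∈ c.edges

/-- A subordinate vertex of a hole: neither an antenna (source) nor the pivot. -/
def IsHoleSubordinate {V : Type} {G : SimpleGraph V} {v : V} (A : V → V → Prop)
    (c : G.Walk v v) (x : V) : Prop :=
  x ∈ c.support ∧ ¬ IsHoleSource A c x ∧ ¬ IsHolePivot A c x

/-- `S` is the vertex set of a (possibly empty) branch (downward path) starting at `u`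
in the rooted tree given by the parent function. -/
def IsBranchFrom {V : Type} (parent : V → V) (u : V) (S : Set V) : Prop :=
  S = ∅ ∨ (u ∈ S ∧ (∀ w ∈ S, w ≠ u → parent w ∈ S ∧ parent w ≠ w) ∧
    ∀ w ∈ S, ∀ w' ∈ S, w ≠ u → w' ≠ u → parent w = parent w' → w = w')

/-- A Burling tree: a rooted tree (given by a parent function) together with a last-born
function and a choose function assigning to each non-last-born non-root vertex the vertex set
of a branch starting at the last-born of its parent. -/
structure BurlingTree (V : Type) where
  parent : V → V
  root : V
  parent_root : parent root = root
  reach : ∀ v, ∃ n, parent^[n] v = root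
  lastBorn : V → V
  lastBorn_child : ∀ v, (∃ u, u ≠ v ∧ parent u = v) → parent (lastBorn v) = v ∧ lastBorn v ≠ v
  choosePath : V → Set V
  choosePath_empty : ∀ v, v = root ∨ v = lastBorn (parent v) → choosePath v = ∅
  choosePath_branch : ∀ v, v ≠ root → v ≠ lastBorn (parent v) →
    IsBranchFrom parent (lastBorn (parent v)) (choosePath v)

/-- The arcs of the oriented graph fully derived from a Burling tree. -/
def BurlingTree.Arc {V : Type} (T : BurlingTree V) (u v : V) : Prop :=
  v ∈ T.choosePath u

/-- `A` orients `G` so that `G` with this orientation is an oriented graph derived from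
some Burling tree (an oriented Burling graph). -/
def IsOrientedBurling {W : Type} (G : SimpleGraph W) (A : W → W → Prop) : Prop :=
  IsOrientation G A ∧
    ∃ (V : Type) (T : BurlingTree V) (f : W ↪ V), ∀ u v, A u v ↔ T.Arc (f u) (f v)

/-- A Burling graph (equivalently, a derived graph): the underlying graph of an oriented
graph derived from a Burling tree. -/
def IsBurlingGraph {W : Type} (G : SimpleGraph W) : Prop :=
  ∃ A, IsOrientedBurling G A

/-- A global subordinate vertex of a Burling graph: subordinate in some hole, for every
orientation of the graph as an oriented Burling graph. -/
def IsGlobalSubordinate {W : Type} (G : SimpleGraph W) (x : W) : Prop :=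
  ∀ A, IsOrientedBurling G A →
    ∃ (v : W) (c : G.Walk v v), IsHole G c ∧ IsHoleSubordinate A c x

/-- `H` is a subdivision of `G` via the branch-vertex embedding `f` and the system of
paths `P` replacing the edges of `G`. -/
def IsSubdivisionVia {V W : Type} (H : SimpleGraph W) (G : SimpleGraph V) (f : V ↪ W)
    (P : ∀ ⦃u v : V⦄, G.Adj u v → H.Walk (f u) (f v)) : Prop :=
  (∀ ⦃u v⦄ (h : G.Adj u v), (P h).IsPath ∧ 1 ≤ (P h).length) ∧
  (∀ ⦃u v⦄ (h : G.Adj u v) (x : V), f x ∈ (P h).support → x = u ∨ x = v) ∧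
  (∀ ⦃u v u' v'⦄ (h : G.Adj u v) (h' : G.Adj u' v'), s(u, v) ≠ s(u', v') →
    ∀ w, w ∈ (P h).support → w ∈ (P h').support → ∃ x : V, w = f x) ∧
  (∀ w : W, ∃ u v, ∃ h : G.Adj u v, w ∈ (P h).support) ∧
  (∀ ⦃x y : W⦄, H.Adj x y → ∃ u v, ∃ h : G.Adj u v, s(x, y) ∈ (P h).edges)

/-- `H` is a subdivision of `G`. -/
def IsSubdivision {V W : Type} (H : SimpleGraph W) (G : SimpleGraph V) : Prop :=
  ∃ (f : V ↪ W) (P : ∀ ⦃u v : V⦄, G.Adj u v → H.Walk (f u) (f v)), IsSubdivisionVia H G f P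

/-- `G` contains an induced copy of `H`. -/
def InducedCopy {V W : Type} (H : SimpleGraph W) (G : SimpleGraph V) : Prop :=
  ∃ f : W ↪ V, ∀ a b, H.Adj a b ↔ G.Adj (f a) (f b)

/-- The clique number of a graph. -/
noncomputable def cliqueNumber {V : Type} (G : SimpleGraph V) : ℕ :=
  sSup {n | ∃ s : Finset V, G.IsNClique n s}

/-- `G` belongs to `Forb*(H)`: it has no induced subdivision of `H`. -/
def InForbs {VH V : Type} (H : SimpleGraph VH) (G : SimpleGraph V) : Prop :=
  ∀ (U : Type) (S : SimpleGraph U), IsSubdivision S H → ¬ InducedCopy S G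

/-- `H` is weakly pervasive: the class `Forb*(H)` (of finite graphs) is χ-bounded. -/
def WeaklyPervasive {VH : Type} (H : SimpleGraph VH) : Prop :=
  ∃ f : ℕ → ℕ, ∀ (V : Type) (_ : Fintype V) (G : SimpleGraph V),
    InForbs H G → G.chromaticNumber ≤ (f (cliqueNumber G) : ℕ∞)

/-- `G` has a star cutset centered at `v`. -/
def HasStarCutsetAt {V : Type} (G : SimpleGraph V) (v : V) : Prop :=
  ∃ S : Set V, v ∈ S ∧ (∀ u ∈ S, u = v ∨ G.Adj v u) ∧ ¬ (G.induce Sᶜ).Preconnected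

/-- `G` has a star cutset. -/
def HasStarCutset {V : Type} (G : SimpleGraph V) : Prop :=
  ∃ v, HasStarCutsetAt G v

/-- The structure of an `m`-necklace on the graph `G`: beads `B i` (chordless cycles of
length at least 4 through the non-adjacent vertices `a i`, `b i`) joined cyclically by
paths `P i` from `b i` to `a (i+1)` (of length possibly 0, i.e. identification),
with no further vertices or edges. -/
structure Necklace {V : Type} (G : SimpleGraph V) (m : ℕ) where
  a : ZMod m → V
  b : ZMod m → V
  B : ∀ i, G.Walk (a i) (a i)
  P : ∀ i, G.Walk (b i) (a (i + 1))
  B_cycle : ∀ i, (B i).IsCycle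
  B_len : ∀ i, 4 ≤ (B i).length
  b_mem : ∀ i, b i ∈ (B i).support
  ab_ne : ∀ i, a i ≠ b i
  ab_nonadj : ∀ i, ¬ G.Adj (a i) (b i)
  P_path : ∀ i, (P i).IsPath
  bead_disjoint : ∀ i j, i ≠ j → ∀ x, x ∈ (B i).support → x ∈ (B j).support →
    (j = i + 1 ∧ x = b i ∧ x = a j) ∨ (i = j + 1 ∧ x = b j ∧ x = a i)
  path_bead_disjoint : ∀ i j (x : V), x ∈ (P i).support → x ∈ (B j).support →
    x = b i ∨ x = a (i + 1)
  path_disjoint : ∀ i j, i ≠ j → ∀ x, x ∈ (P i).support → x ∈ (P j).support →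
    (x = b i ∨ x = a (i + 1)) ∧ (x = b j ∨ x = a (j + 1))
  cover_vertex : ∀ x : V, (∃ i, x ∈ (B i).support) ∨ ∃ i, x ∈ (P i).support
  cover_edge : ∀ x y, G.Adj x y → (∃ i, s(x, y) ∈ (B i).edges) ∨ ∃ i, s(x, y) ∈ (P i).edges

/-- The bead `B i` of a necklace is short if `a i` and `b i` have a common neighbour. -/
def Necklace.Short {V : Type} {G : SimpleGraph V} {m : ℕ} (N : Necklace G m)
    (i : ZMod m) : Prop :=
  ∃ w, G.Adj (N.a i) w ∧ G.Adj (N.b i) w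

/-- A chandelier: an in-tree (given by a parent function on `V \ {hub}`) with at least two
leaves, together with an extra vertex `hub` joined to all the leaves. -/
structure Chandelier (V : Type) where
  hub : V
  root : V
  parent : V → V
  hub_ne_root : hub ≠ root
  parent_root : parent root = root
  parent_hub : parent hub = hub
  parent_ne_hub : ∀ u, u ≠ hub → parent u ≠ hub
  reach : ∀ u, u ≠ hub → ∃ n, parent^[n] u = root
  two_leaves : ∃ l₁ l₂ : V, l₁ ≠ l₂ ∧
    (l₁ ≠ hub ∧ l₁ ≠ root ∧ ∀ w, parent w = l₁ → w = l₁) ∧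
    (l₂ ≠ hub ∧ l₂ ≠ root ∧ ∀ w, parent w = l₂ → w = l₂)

/-- A leaf of the in-tree of a chandelier. -/
def Chandelier.IsLeaf {V : Type} (C : Chandelier V) (u : V) : Prop :=
  u ≠ C.hub ∧ u ≠ C.root ∧ ∀ w, C.parent w = u → w = u

/-- The arcs of (the oriented version of) a chandelier. -/
def Chandelier.Arc {V : Type} (C : Chandelier V) (u w : V) : Prop :=
  (u ≠ C.hub ∧ u ≠ C.root ∧ w = C.parent u) ∨ (C.IsLeaf u ∧ w = C.hub)

/-- The underlying (non-oriented) graph of a chandelier. -/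
def Chandelier.graph {V : Type} (C : Chandelier V) : SimpleGraph V :=
  SimpleGraph.fromRel C.Arc

/-- There is a vertex lying on every cycle of the graph. -/
def HasUniversalCycleVertex {V : Type} (G : SimpleGraph V) : Prop :=
  ∃ x : V, ∀ (w : V) (c : G.Walk w w), c.IsCycle → x ∈ c.support

/-- A Burling-admissible type-4 subdivision of `K₄` sitting inside `G`: branch vertices
`x, y, z, w`, where the two non-subdivided edges `xy`, `xz` share the endpoint `x`, and the
four other edges are replaced by internally disjoint paths of length at least 2. -/
structure Type4K4Core {V : Type} (G : SimpleGraph V) where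
  x : V
  y : V
  z : V
  w : V
  ne_xy : x ≠ y
  ne_xz : x ≠ z
  ne_xw : x ≠ w
  ne_yz : y ≠ z
  ne_yw : y ≠ w
  ne_zw : z ≠ w
  adj_xy : G.Adj x y
  adj_xz : G.Adj x z
  Pxw : G.Walk x w
  Pyz : G.Walk y z
  Pyw : G.Walk y w
  Pzw : G.Walk z w
  Pxw_path : Pxw.IsPath
  Pyz_path : Pyz.IsPath
  Pyw_path : Pyw.IsPath
  Pzw_path : Pzw.IsPath
  Pxw_len : 2 ≤ Pxw.length
  Pyz_len : 2 ≤ Pyz.length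
  Pyw_len : 2 ≤ Pyw.length
  Pzw_len : 2 ≤ Pzw.length
  d₁ : ∀ v, v ∈ Pxw.support → v ∈ Pyz.support → False
  d₂ : ∀ v, v ∈ Pxw.support → v ∈ Pyw.support → v = w
  d₃ : ∀ v, v ∈ Pxw.support → v ∈ Pzw.support → v = w
  d₄ : ∀ v, v ∈ Pyz.support → v ∈ Pyw.support → v = y
  d₅ : ∀ v, v ∈ Pyz.support → v ∈ Pzw.support → v = z
  d₆ : ∀ v, v ∈ Pyw.support → v ∈ Pzw.support → v = w

/-- The vertex set of a type-4 `K₄`-subdivision configuration. -/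
def Type4K4Core.supp {V : Type} {G : SimpleGraph V} (c : Type4K4Core G) : Set V :=
  {v | v ∈ c.Pxw.support ∨ v ∈ c.Pyz.support ∨ v ∈ c.Pyw.support ∨ v ∈ c.Pzw.support}

/-- The edge set of a type-4 `K₄`-subdivision configuration. -/
def Type4K4Core.edges {V : Type} {G : SimpleGraph V} (c : Type4K4Core G) : Set (Sym2 V) :=
  {e | e ∈ c.Pxw.edges ∨ e ∈ c.Pyz.edges ∨ e ∈ c.Pyw.edges ∨ e ∈ c.Pzw.edges ∨
    e = s(c.x, c.y) ∨ e = s(c.x, c.z)}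

/-- The configuration exhausts the whole graph `G`. -/
def Type4K4Core.Spanning {V : Type} {G : SimpleGraph V} (c : Type4K4Core G) : Prop :=
  (∀ v : V, v ∈ c.supp) ∧ ∀ u v, G.Adj u v → s(u, v) ∈ c.edges

/-- A vertex of degree exactly 2. -/
def DegTwo {V : Type} (G : SimpleGraph V) (x : V) : Prop :=
  ∃ p q, p ≠ q ∧ G.Adj x p ∧ G.Adj x q ∧ ∀ r, G.Adj x r → r = p ∨ r = q

end BurlingFormal

/-!
The graph is the wheel with hub `e` and rim `a b c d` whose spokes `Pa, Pb, Pc, Pd` are subdivided.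
Rotating the rim maps the wheel to itself, so every local statement need only be checked on the
spoke `Pa`. A star cutset centred at `v` lies inside the closed neighbourhood `N[v]`; it cannot
disconnect the graph because `G - N[v]` is connected (each of its vertices runs along its spoke and
the rim to one hub vertex: `e` if `v = a`, `a` if `v = e`, `c` if `v` is inside `Pa`) and every
neighbour of `v` has a neighbour outside `N[v]`. Finally, the rim, the cycle `b a Pa e Pb b` and the
cycle `d c Pc e Pd d` have no common vertex.
-/

namespace SimpleGraph

variable {V : Type*} {G : SimpleGraph V} {S : Set V} {u v w x y z : V}

def ReachableAvoiding (G : SimpleGraph V) (S : Set V) (x y : V) : Prop :=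
  ∃ p : G.Walk x y, ∀ z ∈ p.support, z ∉ S

namespace ReachableAvoiding

lemma symm (h : G.ReachableAvoiding S x y) : G.ReachableAvoiding S y x := by
  obtain ⟨p, hp⟩ := h
  exact ⟨p.reverse, by simpa using hp⟩

lemma trans (h : G.ReachableAvoiding S x y) (h' : G.ReachableAvoiding S y z) :
    G.ReachableAvoiding S x z := by
  obtain ⟨p, hp⟩ := h
  obtain ⟨q, hq⟩ := h'
  exact ⟨p.append q, fun z hz => (Walk.mem_support_append_iff p q).1 hz |>.elim (hp z) (hq z)⟩

lemma of_adj (h : G.Adj x y) (hx : x ∉ S) (hy : y ∉ S) : G.ReachableAvoiding S x y :=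
  ⟨h.toWalk, by simp [hx, hy]⟩

end ReachableAvoiding

lemma preconnected_induce_compl_of_forall_reachableAvoiding
    (h : ∀ x ∉ S, G.ReachableAvoiding S x v) : (G.induce Sᶜ).Preconnected := by
  rintro ⟨x, hx⟩ ⟨y, hy⟩
  obtain ⟨p, hp⟩ := (h x hx).trans (h y hy).symm
  exact (p.induce Sᶜ hp).reachable

namespace Walk

lemma reachableAvoiding_getVert_start (p : G.Walk u v) (i : ℕ)
    (hS : ∀ j ≤ i, j ≤ p.length → p.getVert j ∉ S) :
    G.ReachableAvoiding S (p.getVert i) u := by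
  refine ⟨(p.take i).reverse, fun z hz => ?_⟩
  rw [support_reverse, List.mem_reverse] at hz
  obtain ⟨m, rfl, hm⟩ := mem_support_iff_exists_getVert.1 hz
  rw [take_length] at hm
  rw [take_getVert]
  exact hS _ (min_le_left _ _) ((min_le_right _ _).trans (hm.trans (min_le_right _ _)))

lemma reachableAvoiding_getVert_end (p : G.Walk u v) {i : ℕ} (hi : i ≤ p.length)
    (hS : ∀ j, i ≤ j → j ≤ p.length → p.getVert j ∉ S) :
    G.ReachableAvoiding S (p.getVert i) v := by
  refine ⟨p.drop i, fun z hz => ?_⟩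
  obtain ⟨m, rfl, hm⟩ := mem_support_iff_exists_getVert.1 hz
  rw [drop_length] at hm
  rw [drop_getVert]
  exact hS _ (by omega) (by omega)

lemma IsPath.reachableAvoiding_end {p : G.Walk u v} (hp : p.IsPath)
    (hS : ∀ z ∈ p.support, z ∈ S → z = u) (hx : x ∈ p.support) (hxS : x ∉ S) :
    G.ReachableAvoiding S x v := by
  obtain ⟨i, rfl, hi⟩ := mem_support_iff_exists_getVert.1 hx
  refine p.reachableAvoiding_getVert_end hi fun j hij hj hjS => hxS ?_
  have hj0 := (hp.getVert_eq_start_iff hj).1 (hS _ (p.getVert_mem_support j) hjS)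
  obtain rfl : i = 0 := by omega
  rwa [← hj0]

lemma IsPath.reachableAvoiding_start {p : G.Walk u v} (hp : p.IsPath)
    (hS : ∀ z ∈ p.support, z ∈ S → z = v) (hx : x ∈ p.support) (hxS : x ∉ S) :
    G.ReachableAvoiding S x u :=
  hp.reverse.reachableAvoiding_end (by simpa using hS) (by simpa using hx) hxS

lemma IsPath.eq_getVert_sub_one_or_add_one {p : G.Walk u v} (hp : p.IsPath) {i : ℕ}
    (hi : i ≤ p.length) (h : s(p.getVert i, y) ∈ p.edges) :
    y = p.getVert (i - 1) ∨ y = p.getVert (i + 1) := by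
  obtain ⟨j, hj, hje⟩ := p.mk_mem_edges_iff_exists.1 h
  rcases Sym2.eq_iff.1 hje with ⟨hji, rfl⟩ | ⟨rfl, hji⟩
  · obtain rfl : j = i := hp.getVert_injOn (by simp; omega) (by simpa) hji
    exact .inr rfl
  · obtain rfl : j + 1 = i := hp.getVert_injOn (by simp; omega) (by simpa) hji
    exact .inl rfl

lemma exists_adj_of_mem_support (p : G.Walk u v) (hp : ¬ p.Nil) (hx : x ∈ p.support) :
    ∃ y, G.Adj x y := by
  obtain ⟨i, rfl, hi⟩ := mem_support_iff_exists_getVert.1 hx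
  rcases hi.lt_or_eq with hi | rfl
  · exact ⟨_, p.adj_getVert_succ hi⟩
  · rw [p.getVert_length]
    exact ⟨_, (p.adj_penultimate hp).symm⟩

lemma IsPath.isCycle_cons_append_reverse {p : G.Walk u w} {q : G.Walk v w} (hp : p.IsPath)
    (hq : q.IsPath) (h : G.Adj v u) (hv : v ∉ p.support)
    (hpq : ∀ x ∈ p.support, x ∈ q.support → x = w) (hlen : 1 ≤ p.length) :
    ((cons h p).append q.reverse).IsCycle := by
  refine IsPath.isCycle_append (hp.cons hv) hq.reverse ?_ (.inl (by simp; omega))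
  intro x hxp hxq
  simp only [support_cons, List.tail_cons] at hxp
  obtain rfl := hpq x hxp (by simpa using List.mem_of_mem_tail hxq)
  have hnodup := hq.reverse.support_nodup
  rw [← cons_tail_support] at hnodup
  exact (List.nodup_cons.1 hnodup).1 hxq

end Walk

end SimpleGraph

namespace BurlingFormal

open SimpleGraph Walk

variable {V : Type} {G : SimpleGraph V}

theorem not_hasStarCutset_of_preconnected_induce_compl
    (hesc : ∀ v u, G.Adj v u → ∃ w, G.Adj u w ∧ w ∉ insert v (G.neighborSet v))
    (hconn : ∀ v, (G.induce (insert v (G.neighborSet v))ᶜ).Preconnected) :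
    ¬ HasStarCutset G := by
  rintro ⟨v, S, hvS, hSv, hdisc⟩
  have hS : S ⊆ insert v (G.neighborSet v) := hSv
  let f := G.induceHomOfLE (Set.compl_subset_compl.2 hS)
  have hescape : ∀ x : ↥Sᶜ, ∃ y, (G.induce Sᶜ).Reachable x (f y) := by
    rintro ⟨x, hx⟩
    by_cases hxv : x ∈ insert v (G.neighborSet v)
    · have hadj : G.Adj v x := hxv.resolve_left (by rintro rfl; exact hx hvS)
      obtain ⟨w, hxw, hw⟩ := hesc v x hadj
      have hxw' : (G.induce Sᶜ).Adj ⟨x, hx⟩ ⟨w, fun h => hw (hS h)⟩ := induce_adj.2 hxw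
      exact ⟨⟨w, hw⟩, hxw'.reachable⟩
    · exact ⟨⟨x, hxv⟩, .refl _⟩
  refine hdisc fun x y => ?_
  obtain ⟨x', hx⟩ := hescape x
  obtain ⟨y', hy⟩ := hescape y
  exact hx.trans (((hconn v x' y').map f.toHom).trans hy.symm)

structure SpokeSubdividedWheel (G : SimpleGraph V) where
  a : V
  b : V
  c : V
  d : V
  e : V
  ne_ab : a ≠ b
  ne_ac : a ≠ c
  ne_ad : a ≠ d
  ne_ae : a ≠ e
  ne_bc : b ≠ c
  ne_bd : b ≠ d
  ne_be : b ≠ e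
  ne_cd : c ≠ d
  ne_ce : c ≠ e
  ne_de : d ≠ e
  hab : G.Adj a b
  hbc : G.Adj b c
  hcd : G.Adj c d
  hda : G.Adj d a
  Pa : G.Walk a e
  Pb : G.Walk b e
  Pc : G.Walk c e
  Pd : G.Walk d e
  hPa : Pa.IsPath
  hPb : Pb.IsPath
  hPc : Pc.IsPath
  hPd : Pd.IsPath
  hla : 2 ≤ Pa.length
  hlb : 2 ≤ Pb.length
  hlc : 2 ≤ Pc.length
  hld : 2 ≤ Pd.length
  dab : ∀ v, v ∈ Pa.support → v ∈ Pb.support → v = e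
  dac : ∀ v, v ∈ Pa.support → v ∈ Pc.support → v = e
  dad : ∀ v, v ∈ Pa.support → v ∈ Pd.support → v = e
  dbc : ∀ v, v ∈ Pb.support → v ∈ Pc.support → v = e
  dbd : ∀ v, v ∈ Pb.support → v ∈ Pd.support → v = e
  dcd : ∀ v, v ∈ Pc.support → v ∈ Pd.support → v = e
  hcovV : ∀ v : V, v ∈ Pa.support ∨ v ∈ Pb.support ∨ v ∈ Pc.support ∨ v ∈ Pd.support
  hcovE : ∀ u v, G.Adj u v → s(u, v) = s(a, b) ∨ s(u, v) = s(b, c) ∨ s(u, v) = s(c, d) ∨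
    s(u, v) = s(d, a) ∨ s(u, v) ∈ Pa.edges ∨ s(u, v) ∈ Pb.edges ∨ s(u, v) ∈ Pc.edges ∨
    s(u, v) ∈ Pd.edges

namespace SpokeSubdividedWheel

def rot (K : SpokeSubdividedWheel G) : SpokeSubdividedWheel G where
  a := K.b
  b := K.c
  c := K.d
  d := K.a
  e := K.e
  ne_ab := K.ne_bc
  ne_ac := K.ne_bd
  ne_ad := K.ne_ab.symm
  ne_ae := K.ne_be
  ne_bc := K.ne_cd
  ne_bd := K.ne_ac.symm
  ne_be := K.ne_ce
  ne_cd := K.ne_ad.symm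
  ne_ce := K.ne_de
  ne_de := K.ne_ae
  hab := K.hbc
  hbc := K.hcd
  hcd := K.hda
  hda := K.hab
  Pa := K.Pb
  Pb := K.Pc
  Pc := K.Pd
  Pd := K.Pa
  hPa := K.hPb
  hPb := K.hPc
  hPc := K.hPd
  hPd := K.hPa
  hla := K.hlb
  hlb := K.hlc
  hlc := K.hld
  hld := K.hla
  dab := K.dbc
  dac := K.dbd
  dad := fun v h1 h2 => K.dab v h2 h1
  dbc := K.dcd
  dbd := fun v h1 h2 => K.dac v h2 h1
  dcd := fun v h1 h2 => K.dad v h2 h1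
  hcovV := fun v => by have := K.hcovV v; tauto
  hcovE := fun u v h => by have := K.hcovE u v h; tauto

lemma forall_of_forall_mem_Pa (K : SpokeSubdividedWheel G) {P : V → Prop}
    (h : ∀ K : SpokeSubdividedWheel G, ∀ x ∈ K.Pa.support, P x) (x : V) : P x := by
  rcases K.hcovV x with hx | hx | hx | hx
  exacts [h K x hx, h K.rot x hx, h K.rot.rot x hx, h K.rot.rot.rot x hx]

variable (K : SpokeSubdividedWheel G)

lemma b_notMem_Pa : K.b ∉ K.Pa.support :=
  fun h => K.ne_be (K.dab _ h K.Pb.start_mem_support)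

lemma c_notMem_Pa : K.c ∉ K.Pa.support :=
  fun h => K.ne_ce (K.dac _ h K.Pc.start_mem_support)

lemma d_notMem_Pa : K.d ∉ K.Pa.support :=
  fun h => K.ne_de (K.dad _ h K.Pd.start_mem_support)

lemma a_notMem_Pb : K.a ∉ K.Pb.support := K.rot.d_notMem_Pa
lemma a_notMem_Pc : K.a ∉ K.Pc.support := K.rot.rot.c_notMem_Pa
lemma a_notMem_Pd : K.a ∉ K.Pd.support := K.rot.rot.rot.b_notMem_Pa

lemma b_notMem_Pc : K.b ∉ K.Pc.support := K.rot.rot.d_notMem_Pa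
lemma b_notMem_Pd : K.b ∉ K.Pd.support := K.rot.rot.rot.c_notMem_Pa
lemma d_notMem_Pb : K.d ∉ K.Pb.support := K.rot.c_notMem_Pa
lemma d_notMem_Pc : K.d ∉ K.Pc.support := K.rot.rot.b_notMem_Pa

lemma getVert_Pa_eq_iff {i j : ℕ} (hi : i ≤ K.Pa.length) (hj : j ≤ K.Pa.length) :
    K.Pa.getVert i = K.Pa.getVert j ↔ i = j :=
  ⟨fun h => K.hPa.getVert_injOn (by simpa) (by simpa) h, fun h => h ▸ rfl⟩

lemma adj_getVert_Pa {i : ℕ} {y : V} (hi : i ≤ K.Pa.length) (h : G.Adj (K.Pa.getVert i) y) :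
    y = K.Pa.getVert (i - 1) ∨ y = K.Pa.getVert (i + 1) ∨ (i = 0 ∧ (y = K.b ∨ y = K.d)) ∨
      (i = K.Pa.length ∧
        (y = K.Pb.penultimate ∨ y = K.Pc.penultimate ∨ y = K.Pd.penultimate)) := by
  have hx := K.Pa.getVert_mem_support i
  have ha : K.Pa.getVert i = K.a → i = 0 := (K.hPa.getVert_eq_start_iff hi).1
  have he : K.Pa.getVert i = K.e → i = K.Pa.length := (K.hPa.getVert_eq_end_iff hi).1
  have hend : ∀ {u} (P : G.Walk u K.e), P.IsPath → s(K.Pa.getVert i, y) ∈ P.edges →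
      K.Pa.getVert i = K.e → y = P.penultimate := fun P hP hy hxe =>
    hP.eq_penultimate_of_mem_edges (by rwa [hxe] at hy)
  rcases K.hcovE _ _ h with h' | h' | h' | h' | h' | h' | h' | h'
  · rcases Sym2.eq_iff.1 h' with ⟨hxa, rfl⟩ | ⟨hxb, -⟩
    exacts [.inr (.inr (.inl ⟨ha hxa, .inl rfl⟩)), (K.b_notMem_Pa (hxb ▸ hx)).elim]
  · rcases Sym2.eq_iff.1 h' with ⟨hxb, -⟩ | ⟨hxc, -⟩
    exacts [(K.b_notMem_Pa (hxb ▸ hx)).elim, (K.c_notMem_Pa (hxc ▸ hx)).elim]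
  · rcases Sym2.eq_iff.1 h' with ⟨hxc, -⟩ | ⟨hxd, -⟩
    exacts [(K.c_notMem_Pa (hxc ▸ hx)).elim, (K.d_notMem_Pa (hxd ▸ hx)).elim]
  · rcases Sym2.eq_iff.1 h' with ⟨hxd, -⟩ | ⟨hxa, rfl⟩
    exacts [(K.d_notMem_Pa (hxd ▸ hx)).elim, .inr (.inr (.inl ⟨ha hxa, .inr rfl⟩))]
  · exact (K.hPa.eq_getVert_sub_one_or_add_one hi h').imp_right .inl
  · have hxe := K.dab _ hx (K.Pb.fst_mem_support_of_mem_edges h')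
    exact .inr (.inr (.inr ⟨he hxe, .inl (hend _ K.hPb h' hxe)⟩))
  · have hxe := K.dac _ hx (K.Pc.fst_mem_support_of_mem_edges h')
    exact .inr (.inr (.inr ⟨he hxe, .inr (.inl (hend _ K.hPc h' hxe))⟩))
  · have hxe := K.dad _ hx (K.Pd.fst_mem_support_of_mem_edges h')
    exact .inr (.inr (.inr ⟨he hxe, .inr (.inr (hend _ K.hPd h' hxe))⟩))

lemma Pa_not_nil : ¬ K.Pa.Nil := not_nil_of_ne K.ne_ae

lemma snd_Pa_ne_e : K.Pa.snd ≠ K.e := by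
  rw [Ne, K.hPa.getVert_eq_end_iff (by linarith [K.hla])]
  linarith [K.hla]

lemma penultimate_Pb_notMem_Pa : K.Pb.penultimate ∉ K.Pa.support :=
  fun h => (K.Pb.adj_penultimate K.rot.Pa_not_nil).ne (K.dab _ h (K.Pb.getVert_mem_support _))

lemma adj_a {y : V} (h : G.Adj K.a y) : y = K.b ∨ y = K.d ∨ y = K.Pa.snd := by
  have hy := K.adj_getVert_Pa (Nat.zero_le _) (K.Pa.getVert_zero ▸ h)
  rw [Nat.zero_sub, getVert_zero] at hy
  rcases hy with rfl | rfl | ⟨-, rfl | rfl⟩ | ⟨h0, -⟩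
  exacts [absurd rfl h.ne, .inr (.inr rfl), .inl rfl, .inr (.inl rfl), by linarith [K.hla]]

lemma adj_e {y : V} (h : G.Adj K.e y) :
    y = K.Pa.penultimate ∨ y = K.Pb.penultimate ∨ y = K.Pc.penultimate ∨
      y = K.Pd.penultimate := by
  have hy := K.adj_getVert_Pa le_rfl (K.Pa.getVert_length ▸ h)
  rw [K.Pa.getVert_of_length_le (Nat.le_succ _)] at hy
  rcases hy with rfl | rfl | ⟨h0, -⟩ | ⟨-, hy⟩
  exacts [.inl rfl, absurd rfl h.ne, by linarith [K.hla], .inr hy]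

lemma adj_getVert_Pa_of_lt {i : ℕ} {y : V} (h0 : 0 < i) (hi : i < K.Pa.length)
    (h : G.Adj (K.Pa.getVert i) y) : y = K.Pa.getVert (i - 1) ∨ y = K.Pa.getVert (i + 1) := by
  rcases K.adj_getVert_Pa hi.le h with hy | hy | ⟨h0', -⟩ | ⟨hi', -⟩
  exacts [.inl hy, .inr hy, by omega, by omega]

lemma not_adj_getVert_Pa_of_notMem {i : ℕ} {y : V} (h0 : 0 < i) (hi : i < K.Pa.length)
    (hy : y ∉ K.Pa.support) : ¬ G.Adj (K.Pa.getVert i) y := fun h =>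
  hy <| (K.adj_getVert_Pa_of_lt h0 hi h).elim (· ▸ getVert_mem_support _ _)
    (· ▸ getVert_mem_support _ _)

lemma not_adj_getVert_Pa_sub_one_add_one {i : ℕ} (h0 : 0 < i) (hi : i < K.Pa.length) :
    ¬ G.Adj (K.Pa.getVert (i - 1)) (K.Pa.getVert (i + 1)) := by
  intro h
  have hmem := K.Pa.getVert_mem_support (i + 1)
  rcases K.adj_getVert_Pa (by omega) h with h' | h' | ⟨-, h' | h'⟩ | ⟨h', -⟩
  · have := (K.getVert_Pa_eq_iff (by omega) (by omega)).1 h'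
    omega
  · have := (K.getVert_Pa_eq_iff (by omega) (by omega)).1 h'
    omega
  · exact K.b_notMem_Pa (h' ▸ hmem)
  · exact K.d_notMem_Pa (h' ▸ hmem)
  · omega

lemma exists_adj_e_notMem_closedNbhd_penultimate :
    ∃ w, G.Adj K.e w ∧ w ∉ insert K.Pa.penultimate (G.neighborSet K.Pa.penultimate) := by
  have hlen := K.hla
  refine ⟨K.Pb.penultimate, (K.Pb.adj_penultimate K.rot.Pa_not_nil).symm, ?_⟩
  rintro (h | h)
  · exact K.penultimate_Pb_notMem_Pa (h ▸ K.Pa.getVert_mem_support _)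
  · exact K.not_adj_getVert_Pa_of_notMem (by omega) (by omega) K.penultimate_Pb_notMem_Pa h

lemma exists_adj_notMem_closedNbhd_of_mem_Pa {u v : V} (hu : u ∈ K.Pa.support)
    (hvu : G.Adj v u) : ∃ w, G.Adj u w ∧ w ∉ insert v (G.neighborSet v) := by
  have hlen := K.hla
  obtain ⟨i, rfl, hi⟩ := mem_support_iff_exists_getVert.1 hu
  rcases Nat.eq_zero_or_pos i with rfl | h0
  · rw [getVert_zero] at hvu ⊢
    have hsnd : ∀ {y}, y ∉ K.Pa.support → K.Pa.snd ∉ insert y (G.neighborSet y) := by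
      rintro y hy (h | h)
      · exact hy (h ▸ K.Pa.getVert_mem_support 1)
      · exact K.not_adj_getVert_Pa_of_notMem one_pos (by omega) hy h.symm
    rcases K.adj_a hvu.symm with rfl | rfl | rfl
    · exact ⟨_, K.Pa.adj_snd K.Pa_not_nil, hsnd K.b_notMem_Pa⟩
    · exact ⟨_, K.Pa.adj_snd K.Pa_not_nil, hsnd K.d_notMem_Pa⟩
    · refine ⟨K.b, K.hab, ?_⟩
      rintro (h | h)
      · exact K.b_notMem_Pa (h ▸ K.Pa.getVert_mem_support 1)
      · exact K.not_adj_getVert_Pa_of_notMem one_pos (by omega) K.b_notMem_Pa h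
  rcases hi.lt_or_eq with hi | rfl
  · rcases K.adj_getVert_Pa_of_lt h0 hi hvu.symm with rfl | rfl
    · refine ⟨_, K.Pa.adj_getVert_succ hi, ?_⟩
      rintro (h | h)
      · have := (K.getVert_Pa_eq_iff (by omega) (by omega)).1 h
        omega
      · exact K.not_adj_getVert_Pa_sub_one_add_one h0 hi h
    · refine ⟨K.Pa.getVert (i - 1), ?_, ?_⟩
      · simpa [Nat.sub_add_cancel h0] using (K.Pa.adj_getVert_succ (i := i - 1) (by omega)).symm
      rintro (h | h)
      · have := (K.getVert_Pa_eq_iff (by omega) (by omega)).1 h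
        omega
      · exact K.not_adj_getVert_Pa_sub_one_add_one h0 hi h.symm
  · rw [getVert_length] at hvu ⊢
    rcases K.adj_e hvu.symm with rfl | rfl | rfl | rfl
    exacts [K.exists_adj_e_notMem_closedNbhd_penultimate,
      K.rot.exists_adj_e_notMem_closedNbhd_penultimate,
      K.rot.rot.exists_adj_e_notMem_closedNbhd_penultimate,
      K.rot.rot.rot.exists_adj_e_notMem_closedNbhd_penultimate]

lemma exists_adj_notMem_closedNbhd (K : SpokeSubdividedWheel G) {u v : V} (hvu : G.Adj v u) :
    ∃ w, G.Adj u w ∧ w ∉ insert v (G.neighborSet v) :=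
  K.forall_of_forall_mem_Pa
    (P := fun u => ∀ v, G.Adj v u → ∃ w, G.Adj u w ∧ w ∉ insert v (G.neighborSet v))
    (fun K' _ hu _ hvu => K'.exists_adj_notMem_closedNbhd_of_mem_Pa hu hvu) u v hvu

lemma exists_adj (K : SpokeSubdividedWheel G) (x : V) : ∃ y, G.Adj x y := by
  rcases K.hcovV x with hx | hx | hx | hx
  exacts [K.Pa.exists_adj_of_mem_support K.Pa_not_nil hx,
    K.Pb.exists_adj_of_mem_support K.rot.Pa_not_nil hx,
    K.Pc.exists_adj_of_mem_support K.rot.rot.Pa_not_nil hx,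
    K.Pd.exists_adj_of_mem_support K.rot.rot.rot.Pa_not_nil hx]

lemma exists_two_adj (K : SpokeSubdividedWheel G) (x : V) :
    ∃ p q, p ≠ q ∧ G.Adj x p ∧ G.Adj x q := by
  obtain ⟨p, hp⟩ := K.exists_adj x
  obtain ⟨q, hq, hqp⟩ := K.exists_adj_notMem_closedNbhd hp.symm
  exact ⟨p, q, fun h => hqp (.inl h.symm), hp, hq⟩

lemma reachableAvoiding_e_of_notMem_closedNbhd_a {x : V}
    (hx : x ∉ insert K.a (G.neighborSet K.a)) :
    G.ReachableAvoiding (insert K.a (G.neighborSet K.a)) x K.e := by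
  have hlen := K.hla
  have hS : ∀ z ∈ insert K.a (G.neighborSet K.a),
      z = K.a ∨ z = K.b ∨ z = K.d ∨ z = K.Pa.snd := by
    rintro z (rfl | hz)
    exacts [.inl rfl, .inr (K.adj_a hz)]
  have hsnd : ∀ {q} {Q : G.Walk q K.e}, (∀ z ∈ K.Pa.support, z ∈ Q.support → z = K.e) →
      K.Pa.snd ∉ Q.support :=
    fun hd h => K.snd_Pa_ne_e (hd _ (K.Pa.getVert_mem_support 1) h)
  rcases K.hcovV x with hxP | hxP | hxP | hxP
  · obtain ⟨i, rfl, hi⟩ := mem_support_iff_exists_getVert.1 hxP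
    have hi2 : 2 ≤ i := by
      by_contra! h
      interval_cases i
      · exact hx (.inl K.Pa.getVert_zero)
      · exact hx (.inr (K.Pa.adj_snd K.Pa_not_nil))
    refine K.Pa.reachableAvoiding_getVert_end hi fun j hij hj hjS => ?_
    rcases hS _ hjS with h | h | h | h
    · have := (K.hPa.getVert_eq_start_iff hj).1 h
      omega
    · exact K.b_notMem_Pa (h ▸ K.Pa.getVert_mem_support j)
    · exact K.d_notMem_Pa (h ▸ K.Pa.getVert_mem_support j)
    · have := (K.getVert_Pa_eq_iff hj (by omega)).1 h
      omega
  · refine K.hPb.reachableAvoiding_end (fun z hz hzS => ?_) hxP hx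
    rcases hS z hzS with rfl | rfl | rfl | rfl
    exacts [(K.a_notMem_Pb hz).elim, rfl, (K.d_notMem_Pb hz).elim, (hsnd K.dab hz).elim]
  · refine K.hPc.reachableAvoiding_end (fun z hz hzS => ?_) hxP hx
    rcases hS z hzS with rfl | rfl | rfl | rfl
    exacts [(K.a_notMem_Pc hz).elim, (K.b_notMem_Pc hz).elim, (K.d_notMem_Pc hz).elim,
      (hsnd K.dac hz).elim]
  · refine K.hPd.reachableAvoiding_end (fun z hz hzS => ?_) hxP hx
    rcases hS z hzS with rfl | rfl | rfl | rfl
    exacts [(K.a_notMem_Pd hz).elim, (K.b_notMem_Pd hz).elim, rfl, (hsnd K.dad hz).elim]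

lemma reachableAvoiding_a_of_mem_Pa_of_notMem_closedNbhd_e {x : V} (hxP : x ∈ K.Pa.support)
    (hx : x ∉ insert K.e (G.neighborSet K.e)) :
    G.ReachableAvoiding (insert K.e (G.neighborSet K.e)) x K.a := by
  have hlen := K.hla
  obtain ⟨i, rfl, hi⟩ := mem_support_iff_exists_getVert.1 hxP
  have hS : ∀ j ≤ K.Pa.length, K.Pa.getVert j ∈ insert K.e (G.neighborSet K.e) →
      K.Pa.length - 1 ≤ j := by
    intro j hj hjS
    have hend : K.Pa.getVert j = K.e → K.Pa.length - 1 ≤ j := fun h => by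
      have := (K.hPa.getVert_eq_end_iff hj).1 h
      omega
    have hmem := K.Pa.getVert_mem_support j
    rcases hjS with h | h
    · exact hend h
    rcases K.adj_e h with h | h | h | h
    · exact ((K.getVert_Pa_eq_iff hj (by omega)).1 h).ge
    · exact hend (K.dab _ hmem (h ▸ getVert_mem_support _ _))
    · exact hend (K.dac _ hmem (h ▸ getVert_mem_support _ _))
    · exact hend (K.dad _ hmem (h ▸ getVert_mem_support _ _))
  refine K.Pa.reachableAvoiding_getVert_start i fun j hji hj hjS => hx ?_
  have := hS j hj hjS
  rcases (show i = K.Pa.length - 1 ∨ i = K.Pa.length by omega) with rfl | rfl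
  · exact .inr (K.Pa.adj_penultimate K.Pa_not_nil).symm
  · exact .inl K.Pa.getVert_length

lemma a_notMem_closedNbhd_e : K.a ∉ insert K.e (G.neighborSet K.e) := by
  have hlen := K.hla
  rintro (h | h)
  · exact K.ne_ae h
  rcases K.adj_e h with h | h | h | h
  · have := (K.getVert_Pa_eq_iff (Nat.zero_le _) (by omega)).1 (K.Pa.getVert_zero.trans h)
    omega
  · exact K.a_notMem_Pb (h ▸ getVert_mem_support _ _)
  · exact K.a_notMem_Pc (h ▸ getVert_mem_support _ _)
  · exact K.a_notMem_Pd (h ▸ getVert_mem_support _ _)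

lemma reachableAvoiding_a_of_notMem_closedNbhd_e {x : V}
    (hx : x ∉ insert K.e (G.neighborSet K.e)) :
    G.ReachableAvoiding (insert K.e (G.neighborSet K.e)) x K.a := by
  have hba := ReachableAvoiding.of_adj K.hab.symm K.rot.a_notMem_closedNbhd_e
    K.a_notMem_closedNbhd_e
  have hcb := ReachableAvoiding.of_adj K.hbc.symm K.rot.rot.a_notMem_closedNbhd_e
    K.rot.a_notMem_closedNbhd_e
  have hda := ReachableAvoiding.of_adj K.hda K.rot.rot.rot.a_notMem_closedNbhd_e
    K.a_notMem_closedNbhd_e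
  rcases K.hcovV x with hxP | hxP | hxP | hxP
  · exact K.reachableAvoiding_a_of_mem_Pa_of_notMem_closedNbhd_e hxP hx
  · exact (K.rot.reachableAvoiding_a_of_mem_Pa_of_notMem_closedNbhd_e hxP hx).trans hba
  · exact ((K.rot.rot.reachableAvoiding_a_of_mem_Pa_of_notMem_closedNbhd_e hxP hx).trans
      hcb).trans hba
  · exact (K.rot.rot.rot.reachableAvoiding_a_of_mem_Pa_of_notMem_closedNbhd_e hxP hx).trans hda

lemma reachableAvoiding_c_of_subset_Pa {S : Set V} (hS : ∀ z ∈ S, z ∈ K.Pa.support) {x : V}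
    (hx : x ∉ S) (hxa : x ∈ K.Pa.support → x = K.e) : G.ReachableAvoiding S x K.c := by
  have hQ : ∀ {q} {Q : G.Walk q K.e}, Q.IsPath →
      (∀ z ∈ K.Pa.support, z ∈ Q.support → z = K.e) → x ∈ Q.support →
      G.ReachableAvoiding S x q :=
    fun hQ hd hxQ => hQ.reachableAvoiding_start (fun z hz hzS => hd z (hS z hzS) hz) hxQ hx
  have hnot : ∀ {y}, y ∉ K.Pa.support → y ∉ S := fun hy h => hy (hS _ h)
  rcases K.hcovV x with hxP | hxP | hxP | hxP
  · exact hQ K.hPc K.dac (hxa hxP ▸ K.Pc.end_mem_support)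
  · exact (hQ K.hPb K.dab hxP).trans (.of_adj K.hbc (hnot K.b_notMem_Pa) (hnot K.c_notMem_Pa))
  · exact hQ K.hPc K.dac hxP
  · exact (hQ K.hPd K.dad hxP).trans
      (.of_adj K.hcd.symm (hnot K.d_notMem_Pa) (hnot K.c_notMem_Pa))

lemma reachableAvoiding_c_of_notMem_closedNbhd_getVert {k : ℕ} (h0 : 0 < k)
    (hk : k < K.Pa.length) {x : V}
    (hx : x ∉ insert (K.Pa.getVert k) (G.neighborSet (K.Pa.getVert k))) :
    G.ReachableAvoiding (insert (K.Pa.getVert k) (G.neighborSet (K.Pa.getVert k))) x K.c := by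
  set S := insert (K.Pa.getVert k) (G.neighborSet (K.Pa.getVert k))
  have hS : ∀ z ∈ S, ∃ j ≤ K.Pa.length, k - 1 ≤ j ∧ j ≤ k + 1 ∧ z = K.Pa.getVert j := by
    rintro z (rfl | hz)
    · exact ⟨k, hk.le, by omega, by omega, rfl⟩
    rcases K.adj_getVert_Pa_of_lt h0 hk hz with rfl | rfl
    exacts [⟨k - 1, by omega, le_rfl, by omega, rfl⟩, ⟨k + 1, hk, by omega, le_rfl, rfl⟩]
  have hsub : ∀ z ∈ S, z ∈ K.Pa.support := fun z hz => by
    obtain ⟨j, -, -, -, rfl⟩ := hS z hz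
    exact getVert_mem_support _ _
  have hidx : ∀ j ≤ K.Pa.length, K.Pa.getVert j ∈ S → k - 1 ≤ j ∧ j ≤ k + 1 :=
    fun j hj hjS => by
    obtain ⟨j', hj', h1, h2, h⟩ := hS _ hjS
    obtain rfl := (K.getVert_Pa_eq_iff hj hj').1 h
    exact ⟨h1, h2⟩
  by_cases hxP : x ∈ K.Pa.support
  swap
  · exact K.reachableAvoiding_c_of_subset_Pa hsub hx (absurd · hxP)
  obtain ⟨i, rfl, hi⟩ := mem_support_iff_exists_getVert.1 hxP
  have hik : i < k - 1 ∨ k + 1 < i := by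
    by_contra! h
    rcases (show i = k - 1 ∨ i = k ∨ i = k + 1 by omega) with rfl | rfl | rfl
    · exact hx (.inr (by simpa [Nat.sub_add_cancel h0] using
        (K.Pa.adj_getVert_succ (i := k - 1) (by omega)).symm))
    · exact hx (.inl rfl)
    · exact hx (.inr (K.Pa.adj_getVert_succ hk))
  rcases hik with hik | hik
  · have ha : K.a ∉ S := fun h => by
      have := hidx 0 (Nat.zero_le _) (by rwa [getVert_zero])
      omega
    refine (K.Pa.reachableAvoiding_getVert_start i fun j hji hj hjS => ?_).trans
      ((ReachableAvoiding.of_adj K.hab ha fun h => K.b_notMem_Pa (hsub _ h)).trans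
        (K.reachableAvoiding_c_of_subset_Pa hsub (fun h => K.b_notMem_Pa (hsub _ h))
          (absurd · K.b_notMem_Pa)))
    have := hidx j hj hjS
    omega
  · have he : K.e ∉ S := fun h => by
      have := hidx _ le_rfl (by rwa [getVert_length])
      omega
    refine (K.Pa.reachableAvoiding_getVert_end hi fun j hij hj hjS => ?_).trans
      (K.reachableAvoiding_c_of_subset_Pa hsub he fun _ => rfl)
    have := hidx j hj hjS
    omega

lemma preconnected_induce_compl_closedNbhd_of_mem_Pa {v : V} (hv : v ∈ K.Pa.support) :
    (G.induce (insert v (G.neighborSet v))ᶜ).Preconnected := by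
  obtain ⟨k, rfl, hk⟩ := mem_support_iff_exists_getVert.1 hv
  rcases Nat.eq_zero_or_pos k with rfl | h0
  · rw [getVert_zero]
    exact preconnected_induce_compl_of_forall_reachableAvoiding fun _ hx =>
      K.reachableAvoiding_e_of_notMem_closedNbhd_a hx
  rcases hk.lt_or_eq with hk | rfl
  · exact preconnected_induce_compl_of_forall_reachableAvoiding fun _ hx =>
      K.reachableAvoiding_c_of_notMem_closedNbhd_getVert h0 hk hx
  · rw [getVert_length]
    exact preconnected_induce_compl_of_forall_reachableAvoiding fun _ hx =>
      K.reachableAvoiding_a_of_notMem_closedNbhd_e hx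

lemma not_hasStarCutset (K : SpokeSubdividedWheel G) : ¬ HasStarCutset G :=
  not_hasStarCutset_of_preconnected_induce_compl (fun _ _ h => K.exists_adj_notMem_closedNbhd h)
    (K.forall_of_forall_mem_Pa fun K' _ hv => K'.preconnected_induce_compl_closedNbhd_of_mem_Pa hv)

lemma isCycle_rim : (cons K.hab (cons K.hbc (cons K.hcd (cons K.hda nil)))).IsCycle := by
  simp [isCycle_def, K.ne_ab, K.ne_ac, K.ne_ad, K.ne_bc, K.ne_bd, K.ne_cd, K.ne_ab.symm,
    K.ne_ac.symm, K.ne_ad.symm]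

lemma isCycle_Pa_Pb : ((cons K.hab.symm K.Pa).append K.Pb.reverse).IsCycle :=
  K.hPa.isCycle_cons_append_reverse K.hPb K.hab.symm K.b_notMem_Pa K.dab (by linarith [K.hla])

lemma mem_Pa_or_mem_Pb_of_mem_cycle {x : V}
    (hx : x ∈ ((cons K.hab.symm K.Pa).append K.Pb.reverse).support) :
    x ∈ K.Pa.support ∨ x ∈ K.Pb.support := by
  simp only [mem_support_append_iff, support_cons, support_reverse, List.mem_cons,
    List.mem_reverse] at hx
  rcases hx with (rfl | hx) | hx
  exacts [.inr K.Pb.start_mem_support, .inl hx, .inr hx]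

lemma not_hasUniversalCycleVertex (K : SpokeSubdividedWheel G) : ¬ HasUniversalCycleVertex G := by
  rintro ⟨x, hx⟩
  have hab := K.mem_Pa_or_mem_Pb_of_mem_cycle (hx _ _ K.isCycle_Pa_Pb)
  have hcd := K.rot.rot.mem_Pa_or_mem_Pb_of_mem_cycle (hx _ _ K.rot.rot.isCycle_Pa_Pb)
  have hxe : x = K.e := by
    rcases hab with h | h <;> rcases hcd with h' | h'
    exacts [K.dac x h h', K.dad x h h', K.dbc x h h', K.dbd x h h']
  have hrim := hx _ _ K.isCycle_rim
  simp only [support_cons, support_nil, List.mem_cons, List.not_mem_nil, or_false, hxe] at hrim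
  rcases hrim with h | h | h | h | h
  exacts [K.ne_ae h.symm, K.ne_be h.symm, K.ne_ce h.symm, K.ne_de h.symm, K.ne_ae h.symm]

end SpokeSubdividedWheel

/-- the subgraph `H` of a Type A subdivision of `K₅` consisting of the
non-subdivided 4-cycle `a b c d` together with the four paths joining `a, b, c, d` to `e`
has no star cutset, no vertex of degree at most 1, and no vertex lying on every cycle. -/
theorem typeA_K5_core_graph (V : Type) (G : SimpleGraph V) (a b c d e : V)
    (hne : a ≠ b ∧ a ≠ c ∧ a ≠ d ∧ a ≠ e ∧ b ≠ c ∧ b ≠ d ∧ b ≠ e ∧ c ≠ d ∧ c ≠ e ∧ d ≠ e)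
    (hab : G.Adj a b) (hbc : G.Adj b c) (hcd : G.Adj c d) (hda : G.Adj d a)
    (Pa : G.Walk a e) (Pb : G.Walk b e) (Pc : G.Walk c e) (Pd : G.Walk d e)
    (hPa : Pa.IsPath) (hPb : Pb.IsPath) (hPc : Pc.IsPath) (hPd : Pd.IsPath)
    (hla : 2 ≤ Pa.length) (hlb : 2 ≤ Pb.length) (hlc : 2 ≤ Pc.length) (hld : 2 ≤ Pd.length)
    (dab : ∀ v, v ∈ Pa.support → v ∈ Pb.support → v = e)
    (dac : ∀ v, v ∈ Pa.support → v ∈ Pc.support → v = e)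
    (dad : ∀ v, v ∈ Pa.support → v ∈ Pd.support → v = e)
    (dbc : ∀ v, v ∈ Pb.support → v ∈ Pc.support → v = e)
    (dbd : ∀ v, v ∈ Pb.support → v ∈ Pd.support → v = e)
    (dcd : ∀ v, v ∈ Pc.support → v ∈ Pd.support → v = e)
    (hcovV : ∀ v : V, v ∈ Pa.support ∨ v ∈ Pb.support ∨ v ∈ Pc.support ∨ v ∈ Pd.support)
    (hcovE : ∀ u v, G.Adj u v → s(u, v) = s(a, b) ∨ s(u, v) = s(b, c) ∨ s(u, v) = s(c, d) ∨
      s(u, v) = s(d, a) ∨ s(u, v) ∈ Pa.edges ∨ s(u, v) ∈ Pb.edges ∨ s(u, v) ∈ Pc.edges ∨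
      s(u, v) ∈ Pd.edges) :
    ¬ HasStarCutset G ∧ (∀ v : V, ∃ p q, p ≠ q ∧ G.Adj v p ∧ G.Adj v q) ∧
      ¬ HasUniversalCycleVertex G := by
  obtain ⟨h1, h2, h3, h4, h5, h6, h7, h8, h9, h10⟩ := hne
  let K : SpokeSubdividedWheel G := ⟨a, b, c, d, e, h1, h2, h3, h4, h5, h6, h7, h8, h9, h10,
    hab, hbc, hcd, hda, Pa, Pb, Pc, Pd, hPa, hPb, hPc, hPd, hla, hlb, hlc, hld,
    dab, dac, dad, dbc, dbd, dcd, hcovV, hcovE⟩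
  exact ⟨K.not_hasStarCutset, K.exists_two_adj, K.not_hasUniversalCycleVertex⟩

end BurlingFormal
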